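/- The 7×7 matrix over the sixth roots of unity given by M = [[-1,1,1,1,1,1,1],[1,-ω,1,ω,ω²,ω,1],[1,1,-ω,1,ω,ω²,ω],[1,ω,1,-ω,1,ω,ω²],[1,ω²,ω,1,-ω,1,ω],[1,ω,ω²,ω,1,-ω,1],[1,1,ω,ω²,ω,1,-ω]], where ω is a primitive cube root of unity, satisfies M·M* = 7·I₇. -/

import Mathlib

open ComplexConjugate

theorem Complex.conj_eq_pow_of_pow_succ_eq_one {ζ : ℂ} {n : ℕ} (h : ζ ^ (n + 1) = 1) :
    conj ζ = ζ ^ n := by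
  rw [← Complex.inv_eq_conj (Complex.norm_eq_one_of_pow_eq_one h n.succ_ne_zero)]
  exact inv_eq_of_mul_eq_one_right (by rwa [← pow_succ'])

theorem pow_three_eq_one_of_one_add_add_sq_eq_zero {R : Type*} [CommRing R] {ω : R}
    (h : 1 + ω + ω ^ 2 = 0) : ω ^ 3 = 1 := by
  linear_combination (ω - 1) * h

theorem stmt_9_general (ω : ℂ) (hsum : 1 + ω + ω ^ 2 = 0) :
    let M : Matrix (Fin 7) (Fin 7) ℂ :=
      !![-1, 1, 1, 1, 1, 1, 1;
         1, -ω, 1, ω, ω ^ 2, ω, 1;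
         1, 1, -ω, 1, ω, ω ^ 2, ω;
         1, ω, 1, -ω, 1, ω, ω ^ 2;
         1, ω ^ 2, ω, 1, -ω, 1, ω;
         1, ω, ω ^ 2, ω, 1, -ω, 1;
         1, 1, ω, ω ^ 2, ω, 1, -ω]
    M * M.conjTranspose = (7 : ℂ) • (1 : Matrix (Fin 7) (Fin 7) ℂ) := by
  intro M
  have hconj : conj ω = ω ^ 2 :=
    Complex.conj_eq_pow_of_pow_succ_eq_one (pow_three_eq_one_of_one_add_add_sq_eq_zero hsum)
  ext i j
  -- With `hconj`, each entry is a polynomial in `ω`; `grind` reduces it modulo `1 + ω + ω ^ 2`.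
  fin_cases i <;> fin_cases j <;>
    simp [M, Matrix.mul_apply, Fin.sum_univ_succ, hconj] <;> grind

theorem stmt_9 (ω : ℂ) (h3 : ω ^ 3 = 1) (hsum : 1 + ω + ω ^ 2 = 0) :
    let M : Matrix (Fin 7) (Fin 7) ℂ :=
      !![-1, 1, 1, 1, 1, 1, 1;
         1, -ω, 1, ω, ω ^ 2, ω, 1;
         1, 1, -ω, 1, ω, ω ^ 2, ω;
         1, ω, 1, -ω, 1, ω, ω ^ 2;
         1, ω ^ 2, ω, 1, -ω, 1, ω;
         1, ω, ω ^ 2, ω, 1, -ω, 1;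
         1, 1, ω, ω ^ 2, ω, 1, -ω]
    M * M.conjTranspose = (7 : ℂ) • (1 : Matrix (Fin 7) (Fin 7) ℂ) :=
  stmt_9_general ω hsum
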